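/- arXiv:2310.03949 — 3 statements merged into one kernel-verified Lean document; each statement's English description precedes it below -/
import Mathlib

section
/- Let $I$ be a finite set of primes, $s \in \mathbb{N}$, and $a$ a completely multiplicative function with values in $\mathbb{C}$. Then $\left(\sum_{p \in I} a(p)\right)^s = s! \sum_{\substack{p \mid n \Rightarrow p \in I \\ \Omega(n) = s}} a(n) \nu(n)$, where $\Omega(n)$ is the number of prime factors of $n$ counted with multiplicity and $\nu$ is the multiplicative function defined by $\nu(p^j) = 1/j!$ for all primes $p$ and integers $j \geq 0$. -/
/-- The multiplicative function `ν` with `ν (p^j) = 1/j!`. -/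
noncomputable def nu (n : ℕ) : ℝ :=
  ∏ p ∈ n.primeFactors, (1 : ℝ) / (n.factorization p).factorial

lemma omega_eq_sum (n : ℕ) :
    n.primeFactorsList.length = ∑ p ∈ n.primeFactors, n.factorization p := by
  simp_rw [← Nat.primeFactorsList_count_eq]
  have h := Multiset.toFinset_sum_count_eq (↑n.primeFactorsList : Multiset ℕ)
  simpa using h.symm

lemma fact_prod_pow (I : Finset ℕ) (hI : ∀ p ∈ I, p.Prime) (k : ℕ → ℕ) (q : ℕ) :
    (∏ p ∈ I, p ^ k p).factorization q = if q ∈ I then k q else 0 := by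
  classical
  have hne : ∀ p ∈ I, p ^ k p ≠ 0 := fun p hp => pow_ne_zero _ (hI p hp).pos.ne'
  rw [Nat.factorization_prod hne, Finset.sum_apply']
  rw [Finset.sum_congr rfl (g := fun p => if p = q then k p else 0)
    (fun p hp => by
      rw [Nat.factorization_pow, (hI p hp).factorization]
      simp [Finsupp.single_apply, mul_ite]),
    Finset.sum_ite_eq' I q k]

lemma prod_fact_eq_self {I : Finset ℕ} {n : ℕ} (hn : n ≠ 0) (hsub : n.primeFactors ⊆ I) :
    ∏ p ∈ I, p ^ n.factorization p = n := by
  rw [← Finset.prod_subset hsub fun p _ hp => by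
        rw [Finsupp.notMem_support_iff.mp (by rwa [Nat.support_factorization]), pow_zero]]
  exact Nat.factorization_prod_pow_eq_self hn

set_option maxHeartbeats 1000000 in
theorem stmt_3 (I : Finset ℕ) (hI : ∀ p ∈ I, p.Prime) (s : ℕ) (a : ℕ → ℂ)
    (ha : ∀ m n : ℕ, a (m * n) = a m * a n) (ha1 : a 1 = 1) :
    (∑ p ∈ I, a p) ^ s
      = (s.factorial : ℂ) *
        ∑' n : {n : ℕ // 0 < n ∧ n.primeFactors ⊆ I ∧ n.primeFactorsList.length = s},
          a n * (nu n : ℂ) := by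
  classical
  set A : ℕ →* ℂ := { toFun := a, map_one' := ha1, map_mul' := fun x y => ha x y } with hAdef
  have hpos : ∀ k : ℕ → ℕ, 0 < ∏ p ∈ I, p ^ k p :=
    fun k => Finset.prod_pos fun p hp => pow_pos (hI p hp).pos _
  have hfac := fact_prod_pow I hI
  -- properties of the forward map
  have hsub : ∀ k : ℕ → ℕ, (∏ p ∈ I, p ^ k p).primeFactors ⊆ I := by
    intro k q hq
    have h1 : (∏ p ∈ I, p ^ k p).factorization q ≠ 0 := by
      rw [← Nat.support_factorization] at hq
      exact Finsupp.mem_support_iff.mp hq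
    rw [hfac k q] at h1
    by_contra hq'
    simp [hq'] at h1
  have hlen : ∀ k ∈ Finset.piAntidiag I s, (∏ p ∈ I, p ^ k p).primeFactorsList.length = s := by
    intro k hk
    obtain ⟨hks, hksupp⟩ := Finset.mem_piAntidiag.mp hk
    rw [omega_eq_sum]
    rw [Finset.sum_subset (hsub k) (fun p _ hp => by
      rw [Finsupp.notMem_support_iff.mp (by rwa [Nat.support_factorization])])]
    rw [Finset.sum_congr rfl (fun p hp => by rw [hfac k p, if_pos hp])]
    exact hks
  -- the equivalence
  let E : {k : ℕ → ℕ // k ∈ Finset.piAntidiag I s} ≃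
      {n : ℕ // 0 < n ∧ n.primeFactors ⊆ I ∧ n.primeFactorsList.length = s} :=
    { toFun := fun k => ⟨∏ p ∈ I, p ^ k.1 p, hpos k.1, hsub k.1, hlen k.1 k.2⟩
      invFun := fun n => ⟨fun p => n.1.factorization p, by
        obtain ⟨hn0, hnI, hns⟩ := n.2
        rw [Finset.mem_piAntidiag]
        constructor
        · rw [← Finset.sum_subset hnI (fun p _ hp => by
            rw [Finsupp.notMem_support_iff.mp (by rwa [Nat.support_factorization])])]
          rw [← omega_eq_sum]; exact hns
        · intro p hp
          exact hnI (by rw [← Nat.support_factorization]; exact Finsupp.mem_support_iff.mpr hp)⟩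
      left_inv := by
        rintro ⟨k, hk⟩
        obtain ⟨hks, hksupp⟩ := Finset.mem_piAntidiag.mp hk
        ext q
        simp only
        rw [hfac k q]
        by_cases hq : q ∈ I
        · rw [if_pos hq]
        · rw [if_neg hq]
          by_contra h
          exact hq (hksupp q fun h0 => h h0.symm)
      right_inv := by
        rintro ⟨n, hn0, hnI, hns⟩
        exact Subtype.ext (prod_fact_eq_self hn0.ne' hnI) }
  have key : (∑' n : {n : ℕ // 0 < n ∧ n.primeFactors ⊆ I ∧ n.primeFactorsList.length = s},
        a ↑n * ((nu ↑n : ℝ) : ℂ))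
      = ∑ k ∈ I.piAntidiag s,
          a (∏ p ∈ I, p ^ k p) * ((nu (∏ p ∈ I, p ^ k p) : ℝ) : ℂ) := by
    rw [← E.tsum_eq, tsum_fintype, Finset.univ_eq_attach,
      ← Finset.sum_attach (I.piAntidiag s)
        (fun k => a (∏ p ∈ I, p ^ k p) * ((nu (∏ p ∈ I, p ^ k p) : ℝ) : ℂ))]
    exact Finset.sum_congr rfl fun c _ => rfl
  rw [key]
  rw [Finset.sum_pow_eq_sum_piAntidiag, Finset.mul_sum]
  refine Finset.sum_congr rfl fun k hk => ?_
  obtain ⟨hks, hksupp⟩ := Finset.mem_piAntidiag.mp hk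
  set n := ∏ p ∈ I, p ^ k p with hn
  -- a n = ∏ a p ^ k p
  have han : a n = ∏ p ∈ I, a p ^ k p := by
    have : A n = ∏ p ∈ I, A p ^ k p := by
      rw [hn, map_prod]
      exact Finset.prod_congr rfl fun p _ => map_pow A p (k p)
    exact this
  -- nu n
  have hnu : nu n = ∏ p ∈ I, (1 : ℝ) / (k p).factorial := by
    rw [nu]
    rw [Finset.prod_subset (hsub k) (fun p _ hp => by
      rw [Finsupp.notMem_support_iff.mp (by rwa [Nat.support_factorization])]
      simp)]
    exact Finset.prod_congr rfl fun p hp => by rw [hfac k p, if_pos hp]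
  have hmul := Nat.multinomial_spec I k
  rw [hks] at hmul
  have hprodne : ((∏ p ∈ I, (k p).factorial : ℕ) : ℂ) ≠ 0 := by
    exact_mod_cast (Finset.prod_pos fun p _ => (k p).factorial_pos).ne'
  have hprodC : (∏ p ∈ I, ((k p).factorial : ℂ)) ≠ 0 := by
    rw [Finset.prod_ne_zero_iff]
    exact fun p _ => Nat.cast_ne_zero.mpr (k p).factorial_ne_zero
  have hmulC : (Nat.multinomial I k : ℂ)
      = (s.factorial : ℂ) * (∏ p ∈ I, ((k p).factorial : ℂ))⁻¹ := by
    rw [eq_mul_inv_iff_mul_eq₀ hprodC, mul_comm]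
    exact_mod_cast hmul
  rw [han, hnu, hmulC]
  push_cast
  rw [Finset.prod_div_distrib]
  simp only [Finset.prod_const_one]
  ring
end

section
/- Let $\ell$ be an even positive integer and let $z$ be a complex number with $|z| \leq \ell/e^2$. Then $e^{\Re(z)} \leq \max\left\{1, |E_\ell(z)|\left(1 + \frac{1}{15 e^\ell}\right)\right\}$, where $E_\ell(z) = \sum_{s=0}^{\ell} z^s/s!$. -/
/-!
Write `exp z = E_ℓ(z) + R`. Because `‖z‖ ≤ ℓ / e²`, the tail `R` is dominated by
`‖z‖^(ℓ+1) / (ℓ+1)!` times a geometric series of ratio `e⁻²`, and together with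
`ℓ^(ℓ+1) / (ℓ+1)! ≤ e^ℓ / 3` this gives `‖R‖ ≤ 1 / (3 (e² - 1) e^ℓ)`. If `exp (re z) > 1`,
then with `δ = 1 / (15 e^ℓ)` we have `(1 + δ) ‖R‖ ≤ δ < δ exp (re z)` (as `e² > 19/3`),
and the triangle inequality `exp (re z) ≤ ‖E_ℓ(z)‖ + ‖R‖` rearranges to the claim.
-/

open Finset Nat

theorem Complex.norm_exp_sub_sum_range_le_of_le_mul {x : ℂ} {n : ℕ} {r : ℝ} (hr : r < 1)
    (hx : ‖x‖ ≤ r * (n + 1)) :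
    ‖exp x - ∑ m ∈ range n, x ^ m / m.factorial‖ ≤ ‖x‖ ^ n / n ! / (1 - r) := by
  have hr0 : 0 ≤ r := nonneg_of_mul_nonneg_left ((norm_nonneg x).trans hx) (by positivity)
  have htail : exp x - ∑ m ∈ range n, x ^ m / m.factorial = ∑' i, x ^ (i + n) / (i + n)! := by
    rw [exp_eq_exp_ℂ, NormedSpace.exp_eq_tsum_div, sub_eq_iff_eq_add']
    exact ((NormedSpace.expSeries_div_summable x).sum_add_tsum_nat_add n).symm
  have hterm (i : ℕ) : ‖x ^ (i + n) / (i + n)!‖ ≤ ‖x‖ ^ n / n ! * r ^ i := by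
    have hfac : (n ! : ℝ) * (n + 1) ^ i ≤ (i + n)! := by
      rw [add_comm i n]; exact_mod_cast factorial_mul_pow_le_factorial
    calc ‖x ^ (i + n) / (i + n)!‖ = ‖x‖ ^ i * ‖x‖ ^ n / (i + n)! := by
          rw [norm_div, norm_pow, norm_natCast, pow_add]
      _ ≤ (r * (n + 1)) ^ i * ‖x‖ ^ n / (n ! * (n + 1) ^ i) := by gcongr
      _ = ‖x‖ ^ n / n ! * r ^ i := by rw [mul_pow]; field_simp
  rw [htail, div_eq_mul_inv]
  exact tsum_of_norm_bounded ((hasSum_geometric_of_lt_one hr0 hr).mul_left _) hterm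

theorem Real.three_mul_pow_succ_div_factorial_le_exp (n : ℕ) :
    3 * ((n : ℝ) ^ (n + 1) / (n + 1)!) ≤ exp n := by
  rcases n with _ | n
  · simp
  -- At `x = n + 1` the terms of index `n` and `n + 1` of the series of `exp x` coincide and
  -- dominate the term of index `n + 2`.
  have h := sum_le_exp_of_nonneg (x := (n + 1 : ℕ)) (by positivity) (n + 3)
  rw [sum_range_succ, sum_range_succ, sum_range_succ] at h
  have hnn : 0 ≤ ∑ i ∈ range n, ((n + 1 : ℕ) : ℝ) ^ i / i ! := by positivity
  have e1 : ((n + 1 : ℕ) : ℝ) ^ (n + 1) / (n + 1)! = ((n + 1 : ℕ) : ℝ) ^ n / n ! := by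
    rw [factorial_succ, pow_succ]; push_cast; field_simp
  have e2 : ((n + 1 : ℕ) : ℝ) ^ (n + 2) / (n + 2)! ≤ ((n + 1 : ℕ) : ℝ) ^ n / n ! := by
    rw [factorial_succ, factorial_succ, pow_succ, pow_succ]; push_cast
    rw [div_le_div_iff₀ (by positivity) (by positivity)]
    have : (0 : ℝ) ≤ (n + 1) ^ n * n ! := by positivity
    nlinarith
  linarith

theorem Real.seven_lt_exp_two : 7 < exp 2 := by
  have := exp_one_gt_d9
  rw [show (2 : ℝ) = 1 + 1 by norm_num, exp_add]
  nlinarith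

theorem Complex.norm_exp_sub_sum_range_succ_le_of_norm_le_div_exp_two (ℓ : ℕ) {z : ℂ}
    (hz : ‖z‖ ≤ ℓ / Real.exp 2) :
    ‖exp z - ∑ s ∈ range (ℓ + 1), z ^ s / s.factorial‖ ≤
      1 / (3 * (Real.exp 2 - 1) * Real.exp ℓ) := by
  set c := Real.exp 2
  set A := Real.exp ℓ
  have hc : 1 < c := Real.one_lt_exp_iff.mpr two_pos
  have hpow : c ^ (ℓ + 1) = A ^ 2 * c := by
    simp only [c, A, ← Real.exp_nat_mul, ← Real.exp_add]; push_cast; ring_nf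
  have hr : c⁻¹ < 1 := inv_lt_one_of_one_lt₀ hc
  have hx : ‖z‖ ≤ c⁻¹ * ((ℓ + 1 : ℕ) + 1) := by
    rw [inv_mul_eq_div]; refine hz.trans ?_; gcongr; push_cast; linarith
  calc _ ≤ ‖z‖ ^ (ℓ + 1) / (ℓ + 1).factorial / (1 - c⁻¹) :=
        norm_exp_sub_sum_range_le_of_le_mul hr hx
    _ ≤ (ℓ / c) ^ (ℓ + 1) / (ℓ + 1).factorial / (1 - c⁻¹) := by
        have : 0 < 1 - c⁻¹ := by linarith
        gcongr
    _ = 3 * ((ℓ : ℝ) ^ (ℓ + 1) / (ℓ + 1).factorial) / (3 * A ^ 2 * (c - 1)) := by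
        rw [div_pow, hpow]; field_simp
    _ ≤ A / (3 * A ^ 2 * (c - 1)) := by
        gcongr
        exact Real.three_mul_pow_succ_div_factorial_le_exp ℓ
    _ = 1 / (3 * (c - 1) * A) := by field_simp

theorem stmt_6_general (ℓ : ℕ) (z : ℂ)
    (hz : ‖z‖ ≤ ℓ / Real.exp 2) :
    Real.exp z.re ≤
      max 1 (‖∑ s ∈ Finset.range (ℓ + 1), z ^ s / s.factorial‖ *
        (1 + 1 / (15 * Real.exp ℓ))) := by
  rcases le_or_gt (Real.exp z.re) 1 with hle | hgt
  · exact le_max_of_le_left hle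
  refine le_max_of_le_right ?_
  set E := ∑ s ∈ Finset.range (ℓ + 1), z ^ s / s.factorial
  set δ := 1 / (15 * Real.exp ℓ)
  have hA : 1 ≤ Real.exp ℓ := Real.one_le_exp (Nat.cast_nonneg ℓ)
  have hδ : 0 < δ := by positivity
  have hsplit : Real.exp z.re ≤ ‖E‖ + ‖Complex.exp z - E‖ := by
    rw [← Complex.norm_exp]; exact norm_le_norm_add_norm_sub' _ _
  have htail : ‖Complex.exp z - E‖ * (1 + δ) ≤ δ := by
    have hrem := Complex.norm_exp_sub_sum_range_succ_le_of_norm_le_div_exp_two ℓ hz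
    have h7 := Real.seven_lt_exp_two
    have hδ15 : δ ≤ 1 / 15 := one_div_le_one_div_of_le (by norm_num) (by linarith)
    have hD : 0 < 3 * (Real.exp 2 - 1) * Real.exp ℓ := by
      have : 0 < Real.exp 2 - 1 := by linarith
      positivity
    calc ‖Complex.exp z - E‖ * (1 + δ)
          ≤ 1 / (3 * (Real.exp 2 - 1) * Real.exp ℓ) * (1 + 1 / 15) := by gcongr
      _ ≤ δ := by
          rw [div_mul_eq_mul_div, one_mul, div_le_div_iff₀ hD (by positivity)]
          nlinarith
  nlinarith

theorem stmt_6 (ℓ : ℕ) (hℓ : Even ℓ) (hℓpos : 0 < ℓ) (z : ℂ)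
    (hz : ‖z‖ ≤ ℓ / Real.exp 2) :
    Real.exp z.re ≤
      max 1 (‖∑ s ∈ Finset.range (ℓ + 1), z ^ s / s.factorial‖ *
        (1 + 1 / (15 * Real.exp ℓ))) :=
  stmt_6_general ℓ z hz
end

section
/- Assume the Weak Mertens Conjecture, and consequently that the Riemann Hypothesis holds, all nontrivial zeros $\rho$ of $\zeta(s)$ are simple, and $\sum_\rho |\rho\, \zeta'(\rho)|^{-2}$ converges. Then for every real $k \geq 1$, $J_{-k}(T) = \sum_{T < \gamma \leq 2T} |\zeta'(\rho)|^{-2k} = o(T^{2k})$ as $T \to \infty$. -/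
/-!
With `w(ρ) = |ρ ζ'(ρ)|⁻²`, a zero with `T < γ ≤ 2T` satisfies `|ρ| ≤ 3T`, so
`|ζ'(ρ)|^{-2k} = |ρ|^{2k} w(ρ)^k ≤ (3T)^{2k} w(ρ)^k`. Since `∑ w^k ≤ (∑ w)^k` for nonnegative
terms and `k ≥ 1`, this gives `J_{-k}(T) ≤ (3T)^{2k} (∑_{γ > T} w(ρ))^k`, and the tail of the
convergent series `∑ w(ρ)` tends to `0`.
-/

open Filter Asymptotics Topology

section

variable {ι : Type*} {f : ι → ℝ}

lemma rpow_le_tsum_rpow_sub_one_mul (hf : Summable f) (h0 : ∀ i, 0 ≤ f i) {p : ℝ}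
    (hp : 1 ≤ p) (i : ι) : f i ^ p ≤ (∑' j, f j) ^ (p - 1) * f i := by
  calc f i ^ p = f i ^ (p - 1) * f i := by
        rw [← Real.rpow_add_one' (h0 i) (by linarith), sub_add_cancel]
    _ ≤ (∑' j, f j) ^ (p - 1) * f i := by
        have := hf.le_tsum i fun j _ => h0 j
        have := h0 i
        gcongr

lemma Summable.rpow_of_one_le (hf : Summable f) (h0 : ∀ i, 0 ≤ f i) {p : ℝ} (hp : 1 ≤ p) :
    Summable fun i => f i ^ p :=
  .of_nonneg_of_le (fun i => Real.rpow_nonneg (h0 i) p)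
    (rpow_le_tsum_rpow_sub_one_mul hf h0 hp) (hf.mul_left _)

lemma tsum_rpow_le_rpow_tsum (hf : Summable f) (h0 : ∀ i, 0 ≤ f i) {p : ℝ} (hp : 1 ≤ p) :
    ∑' i, f i ^ p ≤ (∑' i, f i) ^ p := by
  calc ∑' i, f i ^ p ≤ ∑' i, (∑' j, f j) ^ (p - 1) * f i :=
        (hf.rpow_of_one_le h0 hp).tsum_le_tsum (rpow_le_tsum_rpow_sub_one_mul hf h0 hp)
          (hf.mul_left _)
    _ = (∑' i, f i) ^ p := by
        rw [tsum_mul_left, ← Real.rpow_add_one' (tsum_nonneg h0) (by linarith), sub_add_cancel]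

lemma tsum_subtype_mono (hf : Summable f) (h0 : ∀ i, 0 ≤ f i) {s t : Set ι} (hst : s ⊆ t) :
    ∑' i : s, f i ≤ ∑' i : t, f i := by
  rw [tsum_subtype, tsum_subtype]
  exact (hf.indicator s).tsum_le_tsum (Set.indicator_le_indicator_of_subset hst h0)
    (hf.indicator t)

lemma tendsto_tsum_subtype_lt_atTop_zero (hf : Summable f) (g : ι → ℝ) :
    Tendsto (fun T => ∑' i : {i // T < g i}, f i) atTop (𝓝 0) := by
  have hlim := tendsto_tsum_of_dominated_convergence (𝓕 := atTop) (g := fun _ => (0 : ℝ))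
    (f := fun T => {i | T < g i}.indicator f) hf.norm
    (fun i => tendsto_const_nhds.congr' <| (eventually_ge_atTop (g i)).mono fun T hT =>
      (Set.indicator_of_notMem (s := {i | T < g i}) (not_lt.mpr hT) f).symm)
    (.of_forall fun T i => norm_indicator_le_norm_self f i)
  rw [tsum_zero] at hlim
  exact hlim.congr fun T => (tsum_subtype {i | T < g i} f).symm

end

lemma Asymptotics.isLittleO_of_le_mul_of_tendsto_zero {α : Type*} {l : Filter α}
    {f g c : α → ℝ} (hc : Tendsto c l (𝓝 0)) (h : ∀ᶠ x in l, ‖f x‖ ≤ c x * ‖g x‖) :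
    f =o[l] g := by
  refine isLittleO_iff.mpr fun ε hε => ?_
  filter_upwards [h, hc.eventually (eventually_le_nhds hε)] with x hfx hcx
  exact hfx.trans (mul_le_mul_of_nonneg_right hcx (norm_nonneg _))

lemma norm_rpow_neg_two_mul_le {𝕜 : Type*} [NormedDivisionRing 𝕜] {z : 𝕜} (hz : z ≠ 0)
    {R : ℝ} (hzR : ‖z‖ ≤ R) {k : ℝ} (hk : 0 ≤ k) (w : 𝕜) :
    ‖w‖ ^ (-(2 * k)) ≤ R ^ (2 * k) * (‖z * w‖ ^ (-2 : ℝ)) ^ k := by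
  have hz' : 0 < ‖z‖ := norm_pos_iff.mpr hz
  have hsplit : ‖w‖ ^ (-(2 * k)) = ‖z‖ ^ (2 * k) * (‖z * w‖ ^ (-2 : ℝ)) ^ k := by
    rw [← Real.rpow_mul (norm_nonneg _), norm_mul, Real.mul_rpow hz'.le (norm_nonneg _),
      ← mul_assoc, ← Real.rpow_add hz', neg_mul, add_neg_cancel, Real.rpow_zero, one_mul]
  rw [hsplit]
  gcongr

noncomputable def criticalZeroWeight : ℂ → ℝ :=
  {ρ | riemannZeta ρ = 0 ∧ 0 < ρ.re ∧ ρ.re < 1}.indicator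
    fun ρ => ‖ρ * deriv riemannZeta ρ‖ ^ (-2 : ℝ)

lemma criticalZeroWeight_nonneg (ρ : ℂ) : 0 ≤ criticalZeroWeight ρ :=
  Set.indicator_nonneg (fun _ _ => by positivity) ρ

lemma norm_deriv_riemannZeta_rpow_le {k T : ℝ} (hk : 0 ≤ k) (hT : 1 ≤ T) {ρ : ℂ}
    (hρ : riemannZeta ρ = 0 ∧ 0 < ρ.re ∧ ρ.re < 1 ∧ T < ρ.im ∧ ρ.im ≤ 2 * T) :
    ‖deriv riemannZeta ρ‖ ^ (-(2 * k)) ≤ (3 * T) ^ (2 * k) * criticalZeroWeight ρ ^ k := by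
  obtain ⟨h0, hre, hre1, him, him2⟩ := hρ
  have hnorm : ‖ρ‖ ≤ 3 * T := (Complex.norm_le_abs_re_add_abs_im ρ).trans <| by
    rw [abs_of_pos hre, abs_of_pos (by linarith)]; linarith
  have hmem : ρ ∈ {ρ : ℂ | riemannZeta ρ = 0 ∧ 0 < ρ.re ∧ ρ.re < 1} := ⟨h0, hre, hre1⟩
  rw [criticalZeroWeight, Set.indicator_of_mem hmem]
  exact norm_rpow_neg_two_mul_le (fun h => by simp [h] at hre) hnorm hk _

lemma tsum_norm_deriv_riemannZeta_rpow_le (hw : Summable criticalZeroWeight) {k T : ℝ}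
    (hk : 1 ≤ k) (hT : 1 ≤ T) :
    ∑' ρ : {ρ : ℂ // riemannZeta ρ = 0 ∧ 0 < ρ.re ∧ ρ.re < 1 ∧ T < ρ.im ∧ ρ.im ≤ 2 * T},
        ‖deriv riemannZeta (ρ : ℂ)‖ ^ (-(2 * k))
      ≤ (3 * T) ^ (2 * k) * (∑' ρ : {ρ : ℂ // T < ρ.im}, criticalZeroWeight ρ) ^ k := by
  set W := {ρ : ℂ | riemannZeta ρ = 0 ∧ 0 < ρ.re ∧ ρ.re < 1 ∧ T < ρ.im ∧ ρ.im ≤ 2 * T}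
  have hwW : Summable fun ρ : W => criticalZeroWeight ρ := hw.subtype W
  have hw0 (ρ : W) := criticalZeroWeight_nonneg ρ
  have hterm (ρ : W) := norm_deriv_riemannZeta_rpow_le (k := k) (by linarith) hT ρ.2
  have hbig := (hwW.rpow_of_one_le hw0 hk).mul_left ((3 * T) ^ (2 * k))
  calc _ ≤ ∑' ρ : W, (3 * T) ^ (2 * k) * criticalZeroWeight ρ ^ k :=
        (hbig.of_nonneg_of_le (fun _ => by positivity) hterm).tsum_le_tsum hterm hbig
    _ = (3 * T) ^ (2 * k) * ∑' ρ : W, criticalZeroWeight ρ ^ k := tsum_mul_left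
    _ ≤ (3 * T) ^ (2 * k) * (∑' ρ : W, criticalZeroWeight ρ) ^ k := by
        gcongr
        exact tsum_rpow_le_rpow_tsum hwW hw0 hk
    _ ≤ (3 * T) ^ (2 * k) * (∑' ρ : {ρ : ℂ // T < ρ.im}, criticalZeroWeight ρ) ^ k := by
        have : 0 ≤ ∑' ρ : W, criticalZeroWeight ρ := tsum_nonneg hw0
        gcongr
        exact tsum_subtype_mono hw criticalZeroWeight_nonneg fun ρ hρ => hρ.2.2.2.1

theorem stmt_9_general
    (hconv : Summable (fun ρ : {ρ : ℂ // riemannZeta ρ = 0 ∧ 0 < ρ.re ∧ ρ.re < 1} =>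
      ‖(ρ : ℂ) * deriv riemannZeta (ρ : ℂ)‖ ^ (-2 : ℝ)))
    (k : ℝ) (hk : 1 ≤ k) :
    (fun T : ℝ =>
        ∑' ρ : {ρ : ℂ // riemannZeta ρ = 0 ∧ 0 < ρ.re ∧ ρ.re < 1 ∧
            T < ρ.im ∧ ρ.im ≤ 2 * T},
          ‖deriv riemannZeta (ρ : ℂ)‖ ^ (-(2 * k)))
      =o[atTop] fun T : ℝ => T ^ (2 * k) := by
  have hw : Summable criticalZeroWeight := summable_subtype_iff_indicator.mp hconv
  set tail := fun T : ℝ => ∑' ρ : {ρ : ℂ // T < ρ.im}, criticalZeroWeight ρ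
  refine isLittleO_of_le_mul_of_tendsto_zero (c := fun T => 3 ^ (2 * k) * tail T ^ k) ?_ ?_
  · have hlim := ((tendsto_tsum_subtype_lt_atTop_zero hw Complex.im).rpow_const
      (Or.inr (by positivity))).const_mul (3 ^ (2 * k))
    rwa [Real.zero_rpow (by positivity), mul_zero] at hlim
  filter_upwards [eventually_ge_atTop 1] with T hT
  rw [Real.norm_of_nonneg (tsum_nonneg fun _ => by positivity),
    Real.norm_of_nonneg (by positivity)]
  calc _ ≤ (3 * T) ^ (2 * k) * tail T ^ k := tsum_norm_deriv_riemannZeta_rpow_le hw hk hT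
    _ = 3 ^ (2 * k) * tail T ^ k * T ^ (2 * k) := by
        rw [Real.mul_rpow (by norm_num) (by linarith)]; ring

theorem stmt_9
    (hRH : RiemannHypothesis)
    (hsimple : ∀ ρ : ℂ, riemannZeta ρ = 0 → 0 < ρ.re → ρ.re < 1 →
      deriv riemannZeta ρ ≠ 0)
    (hconv : Summable (fun ρ : {ρ : ℂ // riemannZeta ρ = 0 ∧ 0 < ρ.re ∧ ρ.re < 1} =>
      ‖(ρ : ℂ) * deriv riemannZeta (ρ : ℂ)‖ ^ (-2 : ℝ)))
    (k : ℝ) (hk : 1 ≤ k) :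
    (fun T : ℝ =>
        ∑' ρ : {ρ : ℂ // riemannZeta ρ = 0 ∧ 0 < ρ.re ∧ ρ.re < 1 ∧
            T < ρ.im ∧ ρ.im ≤ 2 * T},
          ‖deriv riemannZeta (ρ : ℂ)‖ ^ (-(2 * k)))
      =o[atTop] fun T : ℝ => T ^ (2 * k) :=
  stmt_9_general hconv k hk
end
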